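/- arXiv:1901.02109 — 3 statements merged into one kernel-verified Lean document; each statement's English description precedes it below -/
import Mathlib

section
/- There exists a ring homomorphism γ : R → R such that γ fixes every constant power series, γ(X) = μ₁, and γ(φ(f)) = φ(f) for every f ∈ W⟦Y⟧; moreover, any such γ satisfies γ ∘ γ = id_R, so γ is a ring automorphism of R of order dividing 2. -/
/- Setup: `k` a perfect field of characteristic 2, `𝕎 = W(k)` the 2-typical Witt
vectors, `R = 𝕎⟦X⟧` the formal power series ring, `μ₁ = (2 - X)(1 - X)⁻¹` and
`μ = X + μ₁` (modelling `π₀E` with `μ₀ = X`). -/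

noncomputable section

open scoped PowerSeries

instance : Fact (Nat.Prime 2) := ⟨Nat.prime_two⟩

variable (k : Type) [Field k] [CharP k 2] [PerfectField k]

local notation "𝕎" => WittVector 2 k

/-- `μ₁ = γ(μ₀) = (2 - X)·(1 - X)⁻¹`. -/
def μ₁ : 𝕎⟦X⟧ := (2 - PowerSeries.X) * Ring.inverse (1 - PowerSeries.X)

/-- `μ = μ₀ + μ₁`. -/
def μ : 𝕎⟦X⟧ := PowerSeries.X + μ₁ k

/-! `W(k)` is `2`-adically complete, and `f ∈ (2, X)ⁿ` exactly when `coeff j f ∈ (2)^(n - j)` for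
all `j`, so `W(k)⟦X⟧` is `(2, X)`-adically complete; as `μ₁ = 2 + X (μ₁ - 1) ∈ (2, X)`, evaluation
at `μ₁` gives `γ`. A ring map out of `A⟦X⟧` into a separated ring sending `X` into the ideal is
determined by its values on constants and on `X`, by writing `f = X · g + C (f 0)` repeatedly.
This uniqueness does the rest: `x ↦ (2 - x) / (1 - x)` is an involution, so `γ (μ₁) = X`, and
`μ - 2 = X μ₁` is symmetric in `X` and `μ₁`, so `γ ∘ φ = φ`. -/

theorem Ideal.smodEq_smul_top_iff {R : Type*} [CommRing R] {I : Ideal R} {x y : R} :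
    x ≡ y [SMOD (I • ⊤ : Submodule R R)] ↔ x - y ∈ I := by
  rw [smul_eq_mul, Ideal.mul_top, SModEq.sub_mem]

namespace PowerSeries

section AdicCompleteness

variable {A : Type*} [CommRing A] (J : Ideal A)

-- `n - j` truncates: coefficients of index `≥ n` are unconstrained.
def coeffFiltration (n : ℕ) : Ideal A⟦X⟧ where
  carrier := {f | ∀ j, coeff j f ∈ J ^ (n - j)}
  add_mem' hf hg j := by rw [map_add]; exact add_mem (hf j) (hg j)
  zero_mem' j := by rw [map_zero]; exact zero_mem _
  smul_mem' g f hf j := by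
    rw [smul_eq_mul, coeff_mul]
    refine sum_mem fun x hx => Ideal.mul_mem_left _ _ (Ideal.pow_le_pow_right ?_ (hf x.2))
    have := Finset.HasAntidiagonal.mem_antidiagonal.mp hx
    omega

variable {J} in
@[simp]
theorem mem_coeffFiltration {n : ℕ} {f : A⟦X⟧} :
    f ∈ coeffFiltration J n ↔ ∀ j, coeff j f ∈ J ^ (n - j) :=
  Iff.rfl

theorem coeffFiltration_mul_le (a b : ℕ) :
    coeffFiltration J a * coeffFiltration J b ≤ coeffFiltration J (a + b) := by
  refine Ideal.mul_le.mpr fun f hf g hg j => ?_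
  rw [coeff_mul]
  refine sum_mem fun x hx => ?_
  have hxj := Finset.HasAntidiagonal.mem_antidiagonal.mp hx
  have hfg := Ideal.mul_mem_mul (hf x.1) (hg x.2)
  rw [← pow_add] at hfg
  exact Ideal.pow_le_pow_right (by omega) hfg

theorem pow_map_C_sup_span_X_eq (n : ℕ) :
    (J.map C ⊔ Ideal.span {X}) ^ n = coeffFiltration J n := by
  refine le_antisymm ?_ fun f hf => ?_
  · induction n with
    | zero => exact fun f _ j => by simp
    | succ n ih =>
      rw [pow_succ]
      refine (Ideal.mul_mono ih ?_).trans (coeffFiltration_mul_le J n 1)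
      refine sup_le (Ideal.map_le_iff_le_comap.mpr fun a ha j => ?_)
        ((Ideal.span_singleton_le_iff_mem _).mpr fun j => ?_)
      · rcases j with _ | j <;> simp [coeff_C, ha]
      · rcases j with _ | j <;> simp [coeff_X]
  · induction n generalizing f with
    | zero => simp
    | succ n ih =>
      rw [eq_X_mul_shift_add_const f]
      refine add_mem ?_ ?_
      · rw [pow_succ']
        refine Ideal.mul_mem_mul (Ideal.mem_sup_right (Ideal.mem_span_singleton_self X))
          (ih _ fun j => ?_)
        simpa using hf (j + 1)
      · refine Ideal.pow_right_mono le_sup_left _ ?_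
        rw [← Ideal.map_pow]
        exact Ideal.mem_map_of_mem _ (by simpa using hf 0)

instance [IsHausdorff J A] : IsHausdorff (J.map C ⊔ Ideal.span {X}) A⟦X⟧ := by
  refine ⟨fun f hf => ext fun j => IsHausdorff.haus ‹_› _ fun n => ?_⟩
  simp only [Ideal.smodEq_smul_top_iff, sub_zero, pow_map_C_sup_span_X_eq,
    mem_coeffFiltration] at hf ⊢
  simpa using hf (n + j) j

instance [IsPrecomplete J A] : IsPrecomplete (J.map C ⊔ Ideal.span {X}) A⟦X⟧ := by
  refine ⟨fun f hf => ?_⟩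
  simp only [Ideal.smodEq_smul_top_iff, pow_map_C_sup_span_X_eq, mem_coeffFiltration] at hf ⊢
  have hcoeff (j : ℕ) : ∃ L : A, ∀ n, coeff j (f (n + j)) - L ∈ J ^ n := by
    obtain ⟨L, hL⟩ := IsPrecomplete.prec ‹_› (f := fun n => coeff j (f (n + j))) fun hmn =>
      Ideal.smodEq_smul_top_iff.mpr (by simpa using hf (Nat.add_le_add_right hmn j) j)
    exact ⟨L, fun n => Ideal.smodEq_smul_top_iff.mp (hL n)⟩
  choose L hL using hcoeff
  refine ⟨mk L, fun n j => ?_⟩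
  obtain hnj | hjn := le_or_gt n j
  · simp [Nat.sub_eq_zero_of_le hnj]
  · simpa [Nat.sub_add_cancel hjn.le] using hL j (n - j)

instance [IsAdicComplete J A] : IsAdicComplete (J.map C ⊔ Ideal.span {X}) A⟦X⟧ where

end AdicCompleteness

section RingHomToAdicComplete

variable {A S : Type*} [CommRing A] [CommRing S] (I : Ideal S)

theorem exists_ringHom_C_X_of_isAdicComplete [IsAdicComplete I S] (ι : A →+* S) {s : S}
    (hs : s ∈ I) : ∃ ψ : A⟦X⟧ →+* S, (∀ a, ψ (C a) = ι a) ∧ ψ X = s := by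
  -- evaluate with the `I`-adic topology on `S` and the discrete one on `A`
  let : WithIdeal S := ⟨I⟩
  let : UniformSpace A := ⊥
  have : DiscreteUniformity A := ⟨rfl⟩
  obtain ⟨_, _⟩ := (IsAdic.isAdicComplete_iff (I := I) rfl).mp ‹_›
  refine ⟨eval₂Hom (continuous_of_discreteTopology (f := ι))
    (WithIdeal.isTopologicallyNilpotent_of_mem hs), fun a => ?_, ?_⟩ <;> simp [coe_eval₂Hom]

theorem ringHom_ext_of_isHausdorff [IsHausdorff I S] {ψ₁ ψ₂ : A⟦X⟧ →+* S}
    (hC : ∀ a, ψ₁ (C a) = ψ₂ (C a)) (hX : ψ₁ X = ψ₂ X) (hI : ψ₂ X ∈ I) : ψ₁ = ψ₂ := by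
  suffices h : ∀ n f, ψ₁ f - ψ₂ f ∈ I ^ n by
    ext f
    rw [IsHausdorff.eq_iff_smodEq (I := I)]
    intro n
    exact Ideal.smodEq_smul_top_iff.mpr (h n f)
  intro n
  induction n with
  | zero => simp
  | succ n ih =>
    intro f
    obtain ⟨g, c, rfl⟩ : ∃ g c, f = X * g + C c := ⟨_, _, eq_X_mul_shift_add_const f⟩
    have hf : ψ₁ (X * g + C c) - ψ₂ (X * g + C c) = ψ₂ X * (ψ₁ g - ψ₂ g) := by
      simp only [map_add, map_mul, hC, hX]
      ring
    rw [hf, pow_succ']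
    exact Ideal.mul_mem_mul hI (ih g)

end RingHomToAdicComplete

end PowerSeries

local notation "𝔞" =>
  Ideal.map PowerSeries.C (Ideal.span {((2 : ℕ) : 𝕎)}) ⊔ Ideal.span {(PowerSeries.X : 𝕎⟦X⟧)}

section WittPowerSeries

open PowerSeries

variable {k}

omit [CharP k 2] [PerfectField k]

theorem two_mem_ideal_two_X : (2 : 𝕎⟦X⟧) ∈ 𝔞 := by
  have h := Ideal.mem_map_of_mem C (Ideal.mem_span_singleton_self ((2 : ℕ) : 𝕎))
  rw [map_natCast, Nat.cast_ofNat] at h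
  exact Ideal.mem_sup_left h

theorem X_mem_ideal_two_X : (X : 𝕎⟦X⟧) ∈ 𝔞 :=
  Ideal.mem_sup_right (Ideal.mem_span_singleton_self X)

variable (k) in
theorem one_sub_X_mul_μ₁ : (1 - X) * μ₁ k = 2 - X := by
  have hu : IsUnit (1 - X : 𝕎⟦X⟧) := by simp [isUnit_iff_constantCoeff]
  rw [μ₁, mul_left_comm, Ring.mul_inverse_cancel _ hu, mul_one]

theorem μ₁_mem_ideal_two_X : μ₁ k ∈ 𝔞 := by
  rw [show μ₁ k = 2 + X * (μ₁ k - 1) by linear_combination one_sub_X_mul_μ₁ k]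
  exact add_mem two_mem_ideal_two_X (Ideal.mul_mem_right _ _ X_mem_ideal_two_X)

variable (k) in
theorem μ_sub_two : μ k - 2 = X * μ₁ k := by
  rw [μ]
  linear_combination one_sub_X_mul_μ₁ k

theorem map_μ₁ {γ : 𝕎⟦X⟧ →+* 𝕎⟦X⟧} (hX : γ X = μ₁ k) : γ (μ₁ k) = X := by
  have hu : IsUnit (1 - μ₁ k) := by
    rw [← hX, ← map_one γ, ← map_sub]
    exact (isUnit_iff_constantCoeff.mpr (by simp)).map γ
  have h := congrArg γ (one_sub_X_mul_μ₁ k)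
  rw [map_mul, map_sub, map_one, map_sub, map_ofNat, hX] at h
  exact hu.mul_left_cancel (by linear_combination h - one_sub_X_mul_μ₁ k)

end WittPowerSeries

/-- Given `φ : W⟦Y⟧ → R`, the `W`-algebra homomorphism determined by
substituting `Y ↦ μ − 2` (characterized by fixing constants and sending the
variable to `μ - 2`), there exists a ring homomorphism `γ : R → R` fixing every
constant power series, with `γ(X) = μ₁`, and fixing `φ(f)` for every `f`;
moreover any such `γ` satisfies `γ ∘ γ = id`, so `γ` is a ring automorphism of
`R` of order dividing 2. -/
theorem statement1
    (φ : 𝕎⟦X⟧ →+* 𝕎⟦X⟧)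
    (hφC : ∀ a : 𝕎, φ (PowerSeries.C a) = PowerSeries.C a)
    (hφY : φ PowerSeries.X = μ k - 2) :
    (∃ γ : 𝕎⟦X⟧ →+* 𝕎⟦X⟧,
      (∀ a : 𝕎, γ (PowerSeries.C a) = PowerSeries.C a) ∧
      γ PowerSeries.X = μ₁ k ∧
      (∀ f : 𝕎⟦X⟧, γ (φ f) = φ f)) ∧
    (∀ γ : 𝕎⟦X⟧ →+* 𝕎⟦X⟧,
      (∀ a : 𝕎, γ (PowerSeries.C a) = PowerSeries.C a) →
      γ PowerSeries.X = μ₁ k →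
      (∀ f : 𝕎⟦X⟧, γ (φ f) = φ f) →
      γ.comp γ = RingHom.id (𝕎⟦X⟧)) := by
  have hμ : φ PowerSeries.X ∈ 𝔞 := by
    rw [hφY, μ_sub_two]
    exact Ideal.mul_mem_left _ _ μ₁_mem_ideal_two_X
  constructor
  · obtain ⟨γ, hγC, hγX⟩ :=
      PowerSeries.exists_ringHom_C_X_of_isAdicComplete 𝔞 PowerSeries.C μ₁_mem_ideal_two_X
    have hγφ : γ.comp φ = φ :=
      PowerSeries.ringHom_ext_of_isHausdorff 𝔞 (fun a => by simp [hφC, hγC])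
        (by simp [hφY, μ_sub_two, hγX, map_μ₁ hγX, mul_comm]) hμ
    exact ⟨γ, hγC, hγX, fun f => RingHom.congr_fun hγφ f⟩
  · intro γ hC hX _
    refine PowerSeries.ringHom_ext_of_isHausdorff 𝔞 (fun a => ?_) ?_ X_mem_ideal_two_X
    · simp [hC]
    · simp [hX, map_μ₁ hX]
end
end

section
/- There is a unique ring homomorphism Γ : L → L that agrees with γ on R ⊆ L and satisfies Γ(T) = (1 − X)·T. This Γ satisfies Γ²(T) = −T and Γ⁴ = id_L; in particular Γ is a ring automorphism of L of order exactly 4, giving L = E_* the structure of a C₄-algebra. -/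
/- Setup: `k` a perfect field of characteristic 2, `𝕎 = W(k)` the 2-typical Witt
vectors, `R = 𝕎⟦X⟧` the formal power series ring, `μ₁ = (2 - X)(1 - X)⁻¹` and
`μ = X + μ₁` (modelling `π₀E` with `μ₀ = X`). -/

noncomputable section

open scoped PowerSeries

variable (k : Type) [Field k] [CharP k 2] [PerfectField k]

local notation "𝕎" => WittVector 2 k

/- `L = R[T, T⁻¹]` models `E_* = W⟦μ₀⟧[r₁,₀^{±1}]` with `r₁,₀ = T`. -/
local notation "L" => LaurentPolynomial (𝕎⟦X⟧)

/-- `r₁,₁ = (1 − X)·T`. -/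
def r₁₁ : L := LaurentPolynomial.C (1 - PowerSeries.X) * LaurentPolynomial.T 1

/-- `δ₁ = T·r₁,₁`. -/
def δ₁ : L := LaurentPolynomial.T 1 * r₁₁ k

/-- `Σ₂,₀ = T²`. -/
def sig₂₀ : L := LaurentPolynomial.T 1 ^ 2

/-- `Σ₂,₁ = −r₁,₁²`. -/
def sig₂₁ : L := -(r₁₁ k ^ 2)

/-- `T₂ = T² + r₁,₁²`. -/
def T₂ : L := LaurentPolynomial.T 1 ^ 2 + r₁₁ k ^ 2

/-- `Δ₁ = δ₁² = (1 − X)²·T⁴`. -/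
def Δ₁ : L := δ₁ k ^ 2

/-! `γ` fixes `μ = X + μ₁` and sends `X` to `μ₁`, so it sends `μ₁` back to `X`; since a ring
endomorphism of `𝕎⟦X⟧` fixing `𝕎` and `X` is the identity, `γ` is an involution. The twisting
unit `1 - X` satisfies `γ(1 - X)·(1 - X) = (1 - μ₁)(1 - X) = -1`, hence `Γ²(T) = -T` while `Γ²`
is the identity on `𝕎⟦X⟧`, so `Γ⁴ = id`. Existence and uniqueness of `Γ` is the universal
property of `R[T, T⁻¹]` as the localization of `R[T]` at `T`. -/

namespace PowerSeries

variable {R : Type*} [CommRing R]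

theorem ringHom_eq_id_of_map_C_of_map_X {ψ : R⟦X⟧ →+* R⟦X⟧} (hC : ∀ a, ψ (C a) = C a)
    (hX : ψ X = X) : ψ = RingHom.id R⟦X⟧ := by
  have hpoly : ψ.comp Polynomial.coeToPowerSeries.ringHom = Polynomial.coeToPowerSeries.ringHom :=
    Polynomial.ringHom_ext (by simpa using hC) (by simpa using hX)
  ext1 f
  refine PowerSeries.ext fun n ↦ ?_
  -- `ψ` fixes the truncation `trunc (n + 1) f`, so `ψ f ≡ f` modulo `X ^ (n + 1)`.
  set g : R⟦X⟧ := mk fun i ↦ coeff (i + (n + 1)) f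
  have hf : f = X ^ (n + 1) * g + (f.trunc (n + 1) : R⟦X⟧) := eq_X_pow_mul_shift_add_trunc _ f
  have hψf : ψ f - f = X ^ (n + 1) * (ψ g - g) := by
    have htrunc := congrArg (· (f.trunc (n + 1))) hpoly
    simp only [RingHom.comp_apply, Polynomial.coeToPowerSeries.ringHom_apply] at htrunc
    conv_lhs => rw [hf, map_add, map_mul, map_pow, hX, htrunc]
    ring
  have := X_pow_dvd_iff.mp ⟨_, hψf⟩ n (Nat.lt_succ_self n)
  simpa [sub_eq_zero] using this

end PowerSeries

namespace LaurentPolynomial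

variable {R S : Type*} [CommSemiring R]

theorem ringHom_ext_of_map_C_of_map_T [Semiring S] {f g : R[T;T⁻¹] →+* S}
    (hC : ∀ r, f (C r) = g (C r)) (hT : f (T 1) = g (T 1)) : f = g :=
  IsLocalization.ringHom_ext (Submonoid.powers (Polynomial.X : Polynomial R)) <|
    Polynomial.ringHom_ext (by simpa [Polynomial.toLaurent_C] using hC)
      (by simpa [Polynomial.toLaurent_X] using hT)

theorem existsUnique_ringHom_map_C_map_T [CommSemiring S] (f : R →+* S) (u : Sˣ) :
    ∃! F : R[T;T⁻¹] →+* S, (∀ r, F (C r) = f r) ∧ F (T 1) = u :=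
  ⟨eval₂ f u, ⟨eval₂_C f u, by simp⟩, fun _ ⟨hC, hT⟩ ↦
    ringHom_ext_of_map_C_of_map_T (by simp [hC]) (by simp [hT])⟩

section Twisted

variable {R : Type*} [CommRing R] {γ : R →+* R} {a : R} {Γ : R[T;T⁻¹] →+* R[T;T⁻¹]}

theorem ringHom_ne_id_of_map_T_eq_C_mul_T [Nontrivial R] (hT : Γ (T 1) = C a * T 1) (ha : a ≠ 1) :
    Γ ≠ RingHom.id _ := by
  rintro rfl
  have hCa : C a = 1 := (isUnit_T 1).mul_left_inj.mp (hT.symm.trans (one_mul _).symm)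
  exact ha (by simpa using congrArg (·.coeff 0) hCa)

theorem map_map_T_eq_C_mul_T (hC : ∀ r, Γ (C r) = C (γ r)) (hT : Γ (T 1) = C a * T 1) :
    Γ (Γ (T 1)) = C (γ a * a) * T 1 := by
  rw [hT, map_mul, hC, hT, ← mul_assoc, ← map_mul]

theorem map_map_T_eq_neg_T (hC : ∀ r, Γ (C r) = C (γ r)) (hT : Γ (T 1) = C a * T 1)
    (ha : γ a * a = -1) : Γ (Γ (T 1)) = -T 1 := by
  rw [map_map_T_eq_C_mul_T hC hT, ha, map_neg, map_one, neg_one_mul]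

theorem ringHom_comp_comp_comp_eq_id (hC : ∀ r, Γ (C r) = C (γ r))
    (hT : Γ (T 1) = C a * T 1) (hγ : ∀ r, γ (γ r) = r) (ha : γ a * a = -1) :
    Γ.comp (Γ.comp (Γ.comp Γ)) = RingHom.id _ := by
  have hT2 := map_map_T_eq_neg_T hC hT ha
  refine ringHom_ext_of_map_C_of_map_T (fun r ↦ ?_) ?_
  · simp [hC, hγ]
  · simp [hT2]

end Twisted

end LaurentPolynomial

theorem statement7
    (φ : 𝕎⟦X⟧ →+* 𝕎⟦X⟧)
    (hφY : φ PowerSeries.X = μ k - 2)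
    (γ : 𝕎⟦X⟧ →+* 𝕎⟦X⟧)
    (hγC : ∀ a : 𝕎, γ (PowerSeries.C a) = PowerSeries.C a)
    (hγX : γ PowerSeries.X = μ₁ k)
    (hγφ : ∀ f : 𝕎⟦X⟧, γ (φ f) = φ f)
    :
    (∃! Γ : L →+* L,
      (∀ r : 𝕎⟦X⟧, Γ (LaurentPolynomial.C r) = LaurentPolynomial.C (γ r)) ∧
      Γ (LaurentPolynomial.T 1) =
        LaurentPolynomial.C (1 - PowerSeries.X) * LaurentPolynomial.T 1) ∧
    (∀ Γ : L →+* L,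
      (∀ r : 𝕎⟦X⟧, Γ (LaurentPolynomial.C r) = LaurentPolynomial.C (γ r)) →
      Γ (LaurentPolynomial.T 1) =
        LaurentPolynomial.C (1 - PowerSeries.X) * LaurentPolynomial.T 1 →
      Γ (Γ (LaurentPolynomial.T 1)) = -LaurentPolynomial.T 1 ∧
      Γ.comp (Γ.comp (Γ.comp Γ)) = RingHom.id L ∧
      Γ ≠ RingHom.id L ∧
      Γ.comp Γ ≠ RingHom.id L) := by
  have hunit : IsUnit (1 - PowerSeries.X : 𝕎⟦X⟧) := by
    simp [PowerSeries.isUnit_iff_constantCoeff]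
  have hγμ : γ (μ k) = μ k := by
    have hφμ : φ (PowerSeries.X + 2) = μ k := by
      rw [map_add, hφY, map_ofNat]
      ring
    rw [← hφμ, hγφ]
  have hγμ₁ : γ (μ₁ k) = PowerSeries.X := by
    rw [μ, map_add, hγX] at hγμ
    linear_combination hγμ
  have hγγ (f : 𝕎⟦X⟧) : γ (γ f) = f :=
    congrArg (· f) <| PowerSeries.ringHom_eq_id_of_map_C_of_map_X (ψ := γ.comp γ)
      (by simp [hγC]) (by simp [hγX, hγμ₁])
  have hγa : γ (1 - PowerSeries.X) * (1 - PowerSeries.X) = -1 := by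
    rw [map_sub, map_one, hγX, μ₁]
    linear_combination (PowerSeries.X - 2 : 𝕎⟦X⟧) * Ring.mul_inverse_cancel _ hunit
  have hneg : (-1 : 𝕎⟦X⟧) ≠ 1 := by
    intro h
    have h2 : (2 : 𝕎⟦X⟧) = 0 := by linear_combination -h
    apply WittVector.p_nonzero 2 k
    simpa [map_ofNat] using congrArg PowerSeries.constantCoeff h2
  open LaurentPolynomial in
  exact ⟨existsUnique_ringHom_map_C_map_T (C.comp γ) ((hunit.map C).mul (isUnit_T 1)).unit,
    fun Γ hC hT ↦ ⟨map_map_T_eq_neg_T hC hT hγa, ringHom_comp_comp_comp_eq_id hC hT hγγ hγa,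
      ringHom_ne_id_of_map_T_eq_C_mul_T hT (by simp [PowerSeries.X_ne_zero]),
      ringHom_ne_id_of_map_T_eq_C_mul_T (map_map_T_eq_C_mul_T hC hT) (by rwa [hγa])⟩⟩
end
end

section
/- In L the identity Δ₁ = T·Γ(T)·Γ²(T)·Γ³(T) holds; that is, Δ₁ is the norm element r₁,₀·γ(r₁,₀)·γ²(r₁,₀)·γ³(r₁,₀) of the C₄-action on E_*. -/
/- Setup: `k` a perfect field of characteristic 2, `𝕎 = W(k)` the 2-typical Witt
vectors, `R = 𝕎⟦X⟧` the formal power series ring, `μ₁ = (2 - X)(1 - X)⁻¹` and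
`μ = X + μ₁` (modelling `π₀E` with `μ₀ = X`). -/

noncomputable section

open scoped PowerSeries

variable (k : Type) [Field k] [CharP k 2] [PerfectField k]

local notation "𝕎" => WittVector 2 k

/- `L = R[T, T⁻¹]` models `E_* = W⟦μ₀⟧[r₁,₀^{±1}]` with `r₁,₀ = T`. -/
local notation "L" => LaurentPolynomial (𝕎⟦X⟧)

/- Writing `Γ T = u·T` with `u = 1 - X`, one gets `Γ² T = γ(u)·u·T`, and
`γ(u)·u = (1 - μ₁)(1 - X) = (1 - X) - (2 - X) = -1`. Hence `Γ² T = -T`, `Γ³ T = -u·T`, and the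
product of the four conjugates is `u²·T⁴ = Δ₁`. -/

open PowerSeries

section MapEqMul

variable {A : Type*} [CommRing A] {Γ : A →+* A} {t u : A}

theorem map_map_eq_neg_of_map_eq_mul (hΓt : Γ t = u * t) (hu : Γ u * u = -1) :
    Γ (Γ t) = -t := by
  rw [hΓt, map_mul, hΓt, ← mul_assoc, hu, neg_one_mul]

theorem mul_map_mul_map_map_mul_map_map_map_eq_sq (hΓt : Γ t = u * t) (hu : Γ u * u = -1) :
    t * Γ t * Γ (Γ t) * Γ (Γ (Γ t)) = (t * (u * t)) ^ 2 := by
  rw [map_map_eq_neg_of_map_eq_mul hΓt hu, map_neg, hΓt]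
  ring

end MapEqMul

theorem PowerSeries.one_sub_X_mul_one_sub_two_sub_X_mul_inverse {R : Type*} [CommRing R] :
    (1 - X : R⟦X⟧) * (1 - (2 - X) * Ring.inverse (1 - X)) = -1 := by
  have hu : IsUnit (1 - X : R⟦X⟧) := by
    rw [isUnit_iff_constantCoeff]
    simp
  rw [mul_sub, mul_one, mul_left_comm, Ring.mul_inverse_cancel _ hu, mul_one]
  ring

theorem statement12
    (γ : 𝕎⟦X⟧ →+* 𝕎⟦X⟧)
    (hγX : γ PowerSeries.X = μ₁ k)
    (Γ : L →+* L)
    (hΓC : ∀ r : 𝕎⟦X⟧, Γ (LaurentPolynomial.C r) = LaurentPolynomial.C (γ r))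
    (hΓT : Γ (LaurentPolynomial.T 1) =
      LaurentPolynomial.C (1 - PowerSeries.X) * LaurentPolynomial.T 1) :
    Δ₁ k = LaurentPolynomial.T 1 * Γ (LaurentPolynomial.T 1) *
      Γ (Γ (LaurentPolynomial.T 1)) * Γ (Γ (Γ (LaurentPolynomial.T 1))) := by
  have hu : Γ (LaurentPolynomial.C (1 - X)) * LaurentPolynomial.C (1 - X) = -1 := by
    rw [hΓC, ← map_mul, map_sub, map_one, hγX, mul_comm, μ₁,
      one_sub_X_mul_one_sub_two_sub_X_mul_inverse, map_neg, map_one]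
  rw [mul_map_mul_map_map_mul_map_map_map_eq_sq hΓT hu, Δ₁, δ₁, r₁₁]
end
end
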